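/- arXiv:1311.4819 — 2 statements merged into one kernel-verified Lean document; each statement's English description precedes it below -/
import Mathlib

section
/- Let N ≥ 2 and let α₁ < β₁ < α₂ < β₂ < … < α_N < β_N be real numbers; set Y(z) = ∏_{i=1}^N (z − α_i)(z − β_i) and, for ζ = (ζ₁,…,ζ_{N−1}), Z(ζ;z) = ∏_{i=1}^{N−1}(z − ζ_i). Then there exists a unique vector ζ with ζ_i ∈ (β_i, α_{i+1}) for each i = 1,…,N−1 such that ∫_{β_i}^{α_{i+1}} Z(ζ;s)/√|Y(s)| ds = 0 for every i = 1,…,N−1. -/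
open MeasureTheory Set

lemma intOn_one_div_sqrt_left (b a : ℝ) (h : b < a) :
    IntegrableOn (fun s => (Real.sqrt (s - b))⁻¹) (Set.Ioo b a) := by
  have h1 : IntervalIntegrable (fun x : ℝ => x ^ (-(1/2) : ℝ)) volume 0 (a - b) :=
    intervalIntegral.intervalIntegrable_rpow' (by norm_num)
  have h2 := h1.comp_sub_right b
  simp only [zero_add, sub_add_cancel] at h2
  have h3 : IntegrableOn (fun x : ℝ => (x - b) ^ (-(1/2) : ℝ)) (Set.Ioo b a) :=
    (intervalIntegrable_iff_integrableOn_Ioo_of_le h.le).mp h2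
  refine h3.congr_fun (fun s hs => ?_) measurableSet_Ioo
  have hsb : (0:ℝ) < s - b := by simp [Set.mem_Ioo] at hs; linarith [hs.1]
  beta_reduce
  rw [Real.rpow_neg hsb.le, ← Real.sqrt_eq_rpow]

lemma intOn_one_div_sqrt_right (b a : ℝ) (h : b < a) :
    IntegrableOn (fun s => (Real.sqrt (a - s))⁻¹) (Set.Ioo b a) := by
  have h1 : IntervalIntegrable (fun x : ℝ => x ^ (-(1/2) : ℝ)) volume 0 (a - b) :=
    intervalIntegral.intervalIntegrable_rpow' (by norm_num)
  have h2 := h1.comp_sub_left a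
  simp only [sub_zero, sub_sub_cancel] at h2
  have h3 : IntegrableOn (fun x : ℝ => (a - x) ^ (-(1/2) : ℝ)) (Set.Ioo b a) :=
    (intervalIntegrable_iff_integrableOn_Ioo_of_le h.le).mp h2.symm
  refine h3.congr_fun (fun s hs => ?_) measurableSet_Ioo
  have hsb : (0:ℝ) < a - s := by simp [Set.mem_Ioo] at hs; linarith [hs.2]
  beta_reduce
  rw [Real.rpow_neg hsb.le, ← Real.sqrt_eq_rpow]

lemma sqrt_mul_inv_bound {x y T : ℝ} (hx : 0 < x) (hy : 0 < y) (hT : x + y = T) :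
    (Real.sqrt (x * y))⁻¹ ≤ Real.sqrt (2 / T) * ((Real.sqrt x)⁻¹ + (Real.sqrt y)⁻¹) := by
  have hT0 : 0 < T := by linarith
  have key : ∀ u v : ℝ, 0 < u → 0 < v → u ≤ v → u + v = T →
      (Real.sqrt (u * v))⁻¹ ≤ Real.sqrt (2 / T) * ((Real.sqrt u)⁻¹ + (Real.sqrt v)⁻¹) := by
    intro u v hu hv huv hsum
    have hv2 : T / 2 ≤ v := by linarith
    have h1 : (Real.sqrt v)⁻¹ ≤ Real.sqrt (2 / T) := by
      rw [← Real.sqrt_inv]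
      apply Real.sqrt_le_sqrt
      rw [inv_le_comm₀ (by positivity) (by positivity)]
      calc (2 / T)⁻¹ = T / 2 := by field_simp
        _ ≤ v := hv2
    have h2 : (Real.sqrt (u * v))⁻¹ = (Real.sqrt u)⁻¹ * (Real.sqrt v)⁻¹ := by
      rw [Real.sqrt_mul hu.le, mul_inv]
    rw [h2]
    calc (Real.sqrt u)⁻¹ * (Real.sqrt v)⁻¹ ≤ (Real.sqrt u)⁻¹ * Real.sqrt (2 / T) := by
          apply mul_le_mul_of_nonneg_left h1 (by positivity)
      _ = Real.sqrt (2 / T) * (Real.sqrt u)⁻¹ := by ring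
      _ ≤ Real.sqrt (2 / T) * ((Real.sqrt u)⁻¹ + (Real.sqrt v)⁻¹) := by
          have : (0:ℝ) ≤ (Real.sqrt v)⁻¹ := by positivity
          nlinarith [Real.sqrt_nonneg (2 / T)]
  rcases le_total x y with hxy | hxy
  · exact key x y hx hy hxy hT
  · have := key y x hy hx hxy (by linarith)
    rw [mul_comm y x] at this
    linarith [this]

/-- main integrability: if |Y s| ≥ m * ((s-b)*(a-s)) on Ioo b a with m > 0,
and w measurable nonneg, w = (sqrt |Y s|)⁻¹, then integrable. -/
lemma integrableOn_inv_sqrt_weight {Y : ℝ → ℝ} (hYm : Measurable Y) {b a m : ℝ}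
    (hba : b < a) (hm : 0 < m)
    (hlow : ∀ s ∈ Set.Ioo b a, m * ((s - b) * (a - s)) ≤ |Y s|) :
    IntegrableOn (fun s => (Real.sqrt |Y s|)⁻¹) (Set.Ioo b a) := by
  set K : ℝ := Real.sqrt (2 / (a - b)) with hK
  have hg : IntegrableOn
      (fun s => (Real.sqrt m)⁻¹ * (K * ((Real.sqrt (s - b))⁻¹ + (Real.sqrt (a - s))⁻¹)))
      (Set.Ioo b a) := by
    apply Integrable.const_mul
    apply Integrable.const_mul
    exact (intOn_one_div_sqrt_left b a hba).add (intOn_one_div_sqrt_right b a hba)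
  refine Integrable.mono' hg ?_ ?_
  · exact ((hYm.abs.sqrt).inv).aestronglyMeasurable
  · rw [ae_restrict_iff' measurableSet_Ioo]
    filter_upwards with s hs
    obtain ⟨hs1, hs2⟩ := hs
    have hx : (0:ℝ) < s - b := by linarith
    have hy : (0:ℝ) < a - s := by linarith
    have h1 : Real.sqrt (m * ((s - b) * (a - s))) ≤ Real.sqrt |Y s| :=
      Real.sqrt_le_sqrt (hlow s ⟨hs1, hs2⟩)
    have h0 : (0:ℝ) < m * ((s - b) * (a - s)) := by positivity
    have h2 : (Real.sqrt |Y s|)⁻¹ ≤ (Real.sqrt (m * ((s - b) * (a - s))))⁻¹ := by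
      apply inv_anti₀ (by positivity) h1
    have h3 : (Real.sqrt (m * ((s - b) * (a - s))))⁻¹
        = (Real.sqrt m)⁻¹ * (Real.sqrt ((s - b) * (a - s)))⁻¹ := by
      rw [Real.sqrt_mul hm.le, mul_inv]
    have h4 := sqrt_mul_inv_bound hx hy (by ring : (s - b) + (a - s) = a - b)
    have hnorm : ‖(Real.sqrt |Y s|)⁻¹‖ = (Real.sqrt |Y s|)⁻¹ := by
      rw [Real.norm_eq_abs, abs_of_nonneg (by positivity)]
    rw [hnorm]
    calc (Real.sqrt |Y s|)⁻¹ ≤ (Real.sqrt m)⁻¹ * (Real.sqrt ((s - b) * (a - s)))⁻¹ := by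
          rw [← h3]; exact h2
      _ ≤ (Real.sqrt m)⁻¹ * (K * ((Real.sqrt (s - b))⁻¹ + (Real.sqrt (a - s))⁻¹)) := by
          apply mul_le_mul_of_nonneg_left _ (by positivity)
          exact h4

section GapLemmas

variable {w : ℝ → ℝ} {b a : ℝ}

lemma gap_int_mul (hba : b < a) (hw : IntegrableOn w (Set.Ioo b a))
    {f : ℝ → ℝ} (hf : Continuous f) :
    IntegrableOn (fun s => f s * w s) (Set.Ioo b a) := by
  obtain ⟨C, hC⟩ := (isCompact_Icc (a := b) (b := a)).exists_bound_of_continuousOn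
    hf.continuousOn
  refine Integrable.bdd_mul (c := C) hw hf.aestronglyMeasurable ?_
  rw [ae_restrict_iff' measurableSet_Ioo]
  filter_upwards with s hs
  exact hC s (Set.mem_Icc_of_Ioo hs)

lemma gap_int_pos (hba : b < a) (hw : IntegrableOn w (Set.Ioo b a))
    (hwpos : ∀ s ∈ Set.Ioo b a, 0 < w s)
    {f : ℝ → ℝ} (hf : Continuous f) (hfpos : ∀ s ∈ Set.Ioo b a, 0 < f s) :
    0 < ∫ s in Set.Ioo b a, f s * w s := by
  have hint := gap_int_mul hba hw hf
  refine (setIntegral_pos_iff_support_of_nonneg_ae ?_ hint).mpr ?_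
  · filter_upwards [ae_restrict_mem measurableSet_Ioo] with s hs
    exact le_of_lt (mul_pos (hfpos s hs) (hwpos s hs))
  · refine lt_of_lt_of_le (b := volume (Set.Ioo b a)) ?_ (measure_mono ?_)
    · rw [Real.volume_Ioo]
      simp [ENNReal.ofReal_pos, hba]
    · intro s hs
      refine ⟨?_, hs⟩
      simp only [Function.mem_support]
      exact ne_of_gt (mul_pos (hfpos s hs) (hwpos s hs))

lemma gap_sign_change (hba : b < a) (hw : IntegrableOn w (Set.Ioo b a))
    (hwpos : ∀ s ∈ Set.Ioo b a, 0 < w s)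
    {f : ℝ → ℝ} (hf : Continuous f)
    (hzero : ∫ s in Set.Ioo b a, f s * w s = 0) :
    ∃ s ∈ Set.Ioo b a, f s = 0 := by
  by_contra hne
  push_neg at hne
  have : (∀ s ∈ Set.Ioo b a, 0 < f s) ∨ (∀ s ∈ Set.Ioo b a, f s < 0) := by
    by_contra hcon
    push_neg at hcon
    obtain ⟨⟨s1, hs1, hfs1⟩, ⟨s2, hs2, hfs2⟩⟩ := hcon
    have hfs1' : f s1 < 0 := lt_of_le_of_ne hfs1 (hne s1 hs1)
    have hfs2' : 0 < f s2 := lt_of_le_of_ne hfs2 (Ne.symm (hne s2 hs2))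
    have hsub : Set.uIcc s1 s2 ⊆ Set.Ioo b a :=
      (Set.ordConnected_Ioo).uIcc_subset hs1 hs2
    have h0mem : (0:ℝ) ∈ Set.uIcc (f s1) (f s2) := by
      rw [Set.mem_uIcc]; left; exact ⟨hfs1'.le, hfs2'.le⟩
    obtain ⟨s0, hsmem, hfs0⟩ := intermediate_value_uIcc (f := f) (a := s1) (b := s2)
      hf.continuousOn h0mem
    exact hne s0 (hsub hsmem) hfs0
  rcases this with hpos | hneg
  · exact absurd hzero (ne_of_gt (gap_int_pos hba hw hwpos hf hpos))
  · have : 0 < ∫ s in Set.Ioo b a, (-f) s * w s :=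
      gap_int_pos hba hw hwpos hf.neg (fun s hs => by simpa using hneg s hs)
    rw [show (fun s => (-f) s * w s) = fun s => -(f s * w s) by funext s; simp [neg_mul]] at this
    rw [integral_neg, hzero, neg_zero] at this
    exact absurd this (by simp)

end GapLemmas

section Concrete

variable {N : ℕ} {α β : Fin N → ℝ}

lemma positions (hab : ∀ i, α i < β i) (hord : ∀ i j : Fin N, i < j → β i < α j)
    {k l : Fin N} (hkl : k.1 + 1 = l.1) :
    β k < α l ∧ (∀ j, j ≠ l → α j < β k ∨ α l < α j) ∧
      (∀ j, j ≠ k → β j < β k ∨ α l < β j) := by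
  have hkl' : k < l := by rw [Fin.lt_def]; omega
  refine ⟨hord k l hkl', fun j hj => ?_, fun j hj => ?_⟩
  · rcases lt_trichotomy j.1 l.1 with h | h | h
    · left
      have hjk : j.1 ≤ k.1 := by omega
      rcases eq_or_lt_of_le hjk with he | hl
      · have : j = k := Fin.ext he
        rw [this]; exact hab k
      · have hj2 : j < k := by rw [Fin.lt_def]; exact hl
        calc α j < β j := hab j
          _ < α k := hord j k hj2
          _ < β k := hab k
    · exact absurd (Fin.ext h) hj
    · right
      calc α l < β l := hab l
        _ < α j := hord l j (by rw [Fin.lt_def]; exact h)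
  · rcases lt_trichotomy j.1 k.1 with h | h | h
    · left
      have hj2 : j < k := by rw [Fin.lt_def]; exact h
      calc β j < α k := hord j k hj2
        _ < β k := hab k
    · exact absurd (Fin.ext h) hj
    · right
      have hlj : l.1 ≤ j.1 := by omega
      rcases eq_or_lt_of_le hlj with he | hl
      · have : l = j := Fin.ext he
        rw [← this]; exact hab l
      · calc α l < β l := hab l
          _ < α j := hord l j (by rw [Fin.lt_def]; exact hl)
          _ < β j := hab j

lemma weight_pos (hab : ∀ i, α i < β i) (hord : ∀ i j : Fin N, i < j → β i < α j)
    {Y : ℝ → ℝ} (hY : ∀ s, Y s = ∏ i, (s - α i) * (s - β i))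
    {k l : Fin N} (hkl : k.1 + 1 = l.1) :
    ∀ s ∈ Set.Ioo (β k) (α l), 0 < (Real.sqrt |Y s|)⁻¹ := by
  obtain ⟨hba, hP1, hP2⟩ := positions hab hord hkl
  intro s hs
  obtain ⟨hs1, hs2⟩ := hs
  have hYne : Y s ≠ 0 := by
    rw [hY]
    apply Finset.prod_ne_zero_iff.mpr
    intro j _
    apply mul_ne_zero
    · rcases eq_or_ne j l with rfl | hj
      · exact sub_ne_zero_of_ne (ne_of_lt hs2)
      · rcases hP1 j hj with h | h
        · exact sub_ne_zero_of_ne (by linarith)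
        · exact sub_ne_zero_of_ne (by linarith)
    · rcases eq_or_ne j k with rfl | hj
      · exact sub_ne_zero_of_ne (by linarith)
      · rcases hP2 j hj with h | h
        · exact sub_ne_zero_of_ne (by linarith)
        · exact sub_ne_zero_of_ne (by linarith)
  have : 0 < |Y s| := abs_pos.mpr hYne
  positivity

lemma weight_integrable (hab : ∀ i, α i < β i)
    (hord : ∀ i j : Fin N, i < j → β i < α j)
    {Y : ℝ → ℝ} (hY : ∀ s, Y s = ∏ i, (s - α i) * (s - β i))
    {k l : Fin N} (hkl : k.1 + 1 = l.1) :
    IntegrableOn (fun s => (Real.sqrt |Y s|)⁻¹) (Set.Ioo (β k) (α l)) := by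
  obtain ⟨hba, hP1, hP2⟩ := positions hab hord hkl
  have hYc : Continuous Y := by
    have : Y = fun s => ∏ i, (s - α i) * (s - β i) := funext hY
    rw [this]
    exact continuous_finset_prod _ fun j _ => by continuity
  set F : ℝ → ℝ := fun s =>
    (∏ j ∈ Finset.univ.erase l, |s - α j|) * (∏ j ∈ Finset.univ.erase k, |s - β j|) with hF
  have hFc : Continuous F := by
    apply Continuous.mul <;>
      exact continuous_finset_prod _ fun j _ => by continuity
  have hFpos : ∀ s ∈ Set.Icc (β k) (α l), 0 < F s := by
    intro s hs
    obtain ⟨hs1, hs2⟩ := hs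
    apply mul_pos <;> apply Finset.prod_pos <;> intro j hj
    · rcases hP1 j (Finset.ne_of_mem_erase hj) with h | h
      · rw [abs_pos]; exact sub_ne_zero_of_ne (by linarith)
      · rw [abs_pos]; exact sub_ne_zero_of_ne (by linarith)
    · rcases hP2 j (Finset.ne_of_mem_erase hj) with h | h
      · rw [abs_pos]; exact sub_ne_zero_of_ne (by linarith)
      · rw [abs_pos]; exact sub_ne_zero_of_ne (by linarith)
  obtain ⟨s0, hs0, hmin⟩ := isCompact_Icc.exists_isMinOn (Set.nonempty_Icc.mpr hba.le)
    hFc.continuousOn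
  set m : ℝ := F s0 with hm
  have hmpos : 0 < m := hFpos s0 hs0
  apply integrableOn_inv_sqrt_weight hYc.measurable hba hmpos
  intro s hs
  obtain ⟨hs1, hs2⟩ := hs
  have habsY : |Y s| = ((s - β k) * (α l - s)) * F s := by
    rw [hY, Finset.abs_prod]
    have : ∀ j ∈ Finset.univ (α := Fin N), |(s - α j) * (s - β j)| = |s - α j| * |s - β j| :=
      fun j _ => abs_mul _ _
    rw [Finset.prod_congr rfl this, Finset.prod_mul_distrib]
    rw [← Finset.mul_prod_erase Finset.univ (fun j => |s - α j|) (Finset.mem_univ l)]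
    rw [← Finset.mul_prod_erase Finset.univ (fun j => |s - β j|) (Finset.mem_univ k)]
    have h1 : |s - α l| = α l - s := by rw [abs_of_neg (by linarith)]; ring
    have h2 : |s - β k| = s - β k := abs_of_pos (by linarith)
    rw [h1, h2, hF]
    ring
  rw [habsY]
  have hmF : m ≤ F s := hmin (Set.mem_Icc_of_Ioo ⟨hs1, hs2⟩)
  have hnn : (0:ℝ) ≤ (s - β k) * (α l - s) := by nlinarith
  calc m * ((s - β k) * (α l - s)) = ((s - β k) * (α l - s)) * m := by ring
    _ ≤ ((s - β k) * (α l - s)) * F s := mul_le_mul_of_nonneg_left hmF hnn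

end Concrete

section Abstract

open Polynomial

variable {n : ℕ} {b a : Fin n → ℝ} {w : ℝ → ℝ}

lemma pf_cont (c : Fin n → ℝ) : Continuous (fun s : ℝ => ∑ j : Fin n, c j * s ^ (j:ℕ)) :=
  continuous_finset_sum _ fun j _ => by continuity

lemma natDegree_sub_lt' {P Q : ℝ[X]} {n : ℕ} (hn : 0 < n)
    (hP : P.natDegree ≤ n) (hQ : Q.natDegree ≤ n) (h : P.coeff n = Q.coeff n) :
    (P - Q).natDegree < n := by
  rcases eq_or_ne (P - Q) 0 with h0 | h0
  · simpa [h0] using hn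
  rw [natDegree_lt_iff_degree_lt h0, degree_lt_iff_coeff_zero]
  intro m hm
  rw [coeff_sub]
  rcases eq_or_lt_of_le hm with rfl | hlt
  · rw [h, sub_self]
  · rw [coeff_eq_zero_of_natDegree_lt (lt_of_le_of_lt hP hlt),
      coeff_eq_zero_of_natDegree_lt (lt_of_le_of_lt hQ hlt), sub_self]

lemma poly_zero_of_roots {P : ℝ[X]} (hdeg : P.natDegree < n) (ζ : Fin n → ℝ)
    (hinj : Function.Injective ζ) (hev : ∀ i, P.eval (ζ i) = 0) : P = 0 :=
  P.eq_zero_of_natDegree_lt_card_of_eval_eq_zero hinj hev (by simpa using hdeg)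

lemma pf_natDegree (c : Fin n → ℝ) (hn : 0 < n) :
    (∑ j : Fin n, C (c j) * X ^ (j:ℕ)).natDegree < n := by
  have : (∑ j : Fin n, C (c j) * X ^ (j:ℕ)).natDegree ≤ n - 1 := by
    apply natDegree_sum_le_of_forall_le
    intro j _
    refine le_trans (natDegree_mul_le) ?_
    rw [natDegree_C, natDegree_X_pow]
    omega
  omega

lemma pf_eval (c : Fin n → ℝ) (s : ℝ) :
    (∑ j : Fin n, C (c j) * X ^ (j:ℕ)).eval s = ∑ j : Fin n, c j * s ^ (j:ℕ) := by
  rw [eval_finset_sum]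
  simp

lemma pf_coeff (c : Fin n → ℝ) (j : Fin n) :
    (∑ k : Fin n, C (c k) * X ^ (k:ℕ)).coeff (j:ℕ) = c j := by
  rw [finset_sum_coeff]
  rw [Finset.sum_eq_single j]
  · simp
  · intro k _ hk
    rw [coeff_C_mul, coeff_X_pow, if_neg (by simpa [Fin.val_eq_val] using (Ne.symm hk)), mul_zero]
  · simp

variable (hn : 0 < n) (hba : ∀ i, b i < a i) (hsep : ∀ i j : Fin n, i < j → a i ≤ b j)
  (hw : ∀ i, IntegrableOn w (Set.Ioo (b i) (a i)))
  (hwpos : ∀ i, ∀ s ∈ Set.Ioo (b i) (a i), 0 < w s)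

include hba hsep in
lemma zeta_inj {ζ ζ' : Fin n → ℝ} (hζ : ∀ i, ζ i ∈ Set.Ioo (b i) (a i))
    (hζ' : ∀ i, ζ' i ∈ Set.Ioo (b i) (a i)) {i j : Fin n} (h : ζ i = ζ' j) : i = j := by
  by_contra hij
  rcases lt_or_gt_of_ne hij with hlt | hlt
  · have : ζ i < ζ' j := lt_of_lt_of_le (hζ i).2 (le_trans (hsep i j hlt) (hζ' j).1.le)
    exact absurd h (ne_of_lt this)
  · have : ζ' j < ζ i := lt_of_lt_of_le (hζ' j).2 (le_trans (hsep j i hlt) (hζ i).1.le)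
    exact absurd h (ne_of_gt this)

include hn hba hsep hw hwpos in
lemma coeffs_zero (c : Fin n → ℝ)
    (h0 : ∀ i, ∫ s in Set.Ioo (b i) (a i), (∑ j : Fin n, c j * s ^ (j:ℕ)) * w s = 0) :
    c = 0 := by
  have hroot : ∀ i : Fin n, ∃ z ∈ Set.Ioo (b i) (a i),
      ∑ j : Fin n, c j * z ^ (j:ℕ) = 0 := fun i =>
    gap_sign_change (hba i) (hw i) (hwpos i) (pf_cont c) (h0 i)
  choose ζ hζmem hζroot using hroot
  have hinj : Function.Injective ζ := fun i j h => zeta_inj hba hsep hζmem hζmem h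
  have hP : (∑ j : Fin n, C (c j) * X ^ (j:ℕ)) = 0 := by
    apply poly_zero_of_roots (pf_natDegree c hn) ζ hinj
    intro i
    rw [pf_eval]
    exact hζroot i
  funext j
  have := pf_coeff c j
  rw [hP] at this
  simpa using this.symm

include hn hba hsep hw hwpos in
lemma lin_surj (v : Fin n → ℝ) :
    ∃ c : Fin n → ℝ, ∀ i,
      ∫ s in Set.Ioo (b i) (a i), (∑ j : Fin n, c j * s ^ (j:ℕ)) * w s = v i := by
  set G : (Fin n → ℝ) →ₗ[ℝ] (Fin n → ℝ) :=
    { toFun := fun c i => ∫ s in Set.Ioo (b i) (a i), (∑ j : Fin n, c j * s ^ (j:ℕ)) * w s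
      map_add' := by
        intro c d
        funext i
        have h1 := gap_int_mul (hba i) (hw i) (pf_cont c)
        have h2 := gap_int_mul (hba i) (hw i) (pf_cont d)
        simp only [Pi.add_apply]
        rw [← integral_add h1 h2]
        congr 1
        funext s
        rw [← add_mul, ← Finset.sum_add_distrib]
        congr 1
        exact Finset.sum_congr rfl fun j _ => by ring
      map_smul' := by
        intro r c
        funext i
        simp only [RingHom.id_apply, Pi.smul_apply, smul_eq_mul]
        rw [show (r * ∫ s in Set.Ioo (b i) (a i), (∑ j : Fin n, c j * s ^ (j:ℕ)) * w s)
            = r • ∫ s in Set.Ioo (b i) (a i), (∑ j : Fin n, c j * s ^ (j:ℕ)) * w s from rfl,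
          ← integral_smul]
        congr 1
        funext s
        simp only [smul_eq_mul]
        rw [← mul_assoc, Finset.mul_sum]
        congr 1
        exact Finset.sum_congr rfl fun j _ => by ring } with hG
  have hinj : Function.Injective G := by
    rw [← LinearMap.ker_eq_bot, LinearMap.ker_eq_bot']
    intro c hc
    apply coeffs_zero hn hba hsep hw hwpos c
    intro i
    exact congrFun hc i
  have hsurj : Function.Surjective G := (LinearMap.injective_iff_surjective).mp hinj
  obtain ⟨c, hc⟩ := hsurj v
  exact ⟨c, fun i => congrFun hc i⟩

include hn hba hsep hw hwpos in
theorem abstract_exu :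
    ∃! ζ : Fin n → ℝ, (∀ i, ζ i ∈ Set.Ioo (b i) (a i)) ∧
      (∀ i, ∫ s in Set.Ioo (b i) (a i), (∏ j : Fin n, (s - ζ j)) * w s = 0) := by
  -- existence
  obtain ⟨c, hc⟩ := lin_surj hn hba hsep hw hwpos
    (fun i => - ∫ s in Set.Ioo (b i) (a i), s ^ n * w s)
  set P : ℝ[X] := X ^ n + ∑ j : Fin n, C (c j) * X ^ (j:ℕ) with hPdef
  have hPeval : ∀ s : ℝ, P.eval s = s ^ n + ∑ j : Fin n, c j * s ^ (j:ℕ) := by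
    intro s
    rw [hPdef, eval_add, eval_pow, eval_X, pf_eval]
  have hPint0 : ∀ i, ∫ s in Set.Ioo (b i) (a i), P.eval s * w s = 0 := by
    intro i
    have h1 : IntegrableOn (fun s => s ^ n * w s) (Set.Ioo (b i) (a i)) :=
      gap_int_mul (hba i) (hw i) (by continuity)
    have h2 := gap_int_mul (hba i) (hw i) (pf_cont c)
    calc ∫ s in Set.Ioo (b i) (a i), P.eval s * w s
        = ∫ s in Set.Ioo (b i) (a i),
            (s ^ n * w s + (∑ j : Fin n, c j * s ^ (j:ℕ)) * w s) := by
          congr 1; funext s; rw [hPeval]; ring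
      _ = (∫ s in Set.Ioo (b i) (a i), s ^ n * w s)
          + ∫ s in Set.Ioo (b i) (a i), (∑ j : Fin n, c j * s ^ (j:ℕ)) * w s :=
          integral_add h1 h2
      _ = 0 := by rw [hc i]; ring
  have hroot : ∀ i : Fin n, ∃ z ∈ Set.Ioo (b i) (a i), P.eval z = 0 := by
    intro i
    have := gap_sign_change (hba i) (hw i) (hwpos i)
      (f := fun s => P.eval s) (P.continuous_aeval.congr ?_) (hPint0 i)
    · exact this
    · intro s; rfl
  choose ζ hζmem hζroot using hroot
  have hinj : Function.Injective ζ := fun i j h => zeta_inj hba hsep hζmem hζmem h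
  set Q : ℝ[X] := ∏ j : Fin n, (X - C (ζ j)) with hQdef
  have hQmonic : Q.Monic := monic_prod_of_monic _ _ fun j _ => monic_X_sub_C (ζ j)
  have hQdeg : Q.natDegree = n := by
    rw [hQdef, natDegree_prod _ _ (fun j _ => X_sub_C_ne_zero (ζ j))]
    simp [natDegree_X_sub_C]
  have hPdeg : P.natDegree ≤ n := by
    rw [hPdef]
    refine le_trans (natDegree_add_le _ _) ?_
    simp only [natDegree_X_pow]
    exact max_le le_rfl (le_of_lt (pf_natDegree c hn))
  have hPcoeff : P.coeff n = 1 := by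
    rw [hPdef, coeff_add, coeff_X_pow, if_pos rfl,
      coeff_eq_zero_of_natDegree_lt (pf_natDegree c hn)]
    ring
  have hQcoeff : Q.coeff n = 1 := by
    have := hQmonic.coeff_natDegree
    rwa [hQdeg] at this
  have hPQ : P = Q := by
    have hsub : (P - Q).natDegree < n :=
      natDegree_sub_lt' hn hPdeg (le_of_eq hQdeg) (by rw [hPcoeff, hQcoeff])
    have hPQ0 : P - Q = 0 := by
      apply poly_zero_of_roots hsub ζ hinj
      intro i
      rw [eval_sub, hζroot i, hQdef]
      simp only [eval_prod, eval_sub, eval_X, eval_C]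
      rw [Finset.prod_eq_zero (Finset.mem_univ i) (by ring)]
      ring
    exact sub_eq_zero.mp hPQ0
  refine ⟨ζ, ⟨hζmem, fun i => ?_⟩, ?_⟩
  · rw [show (fun s => (∏ j : Fin n, (s - ζ j)) * w s) = fun s => P.eval s * w s by
      funext s; rw [hPQ, hQdef]; simp [eval_prod]]
    exact hPint0 i
  -- uniqueness
  rintro ζ' ⟨hζ'mem, hζ'int⟩
  set Q' : ℝ[X] := ∏ j : Fin n, (X - C (ζ' j)) with hQ'def
  have hQ'monic : Q'.Monic := monic_prod_of_monic _ _ fun j _ => monic_X_sub_C (ζ' j)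
  have hQ'deg : Q'.natDegree = n := by
    rw [hQ'def, natDegree_prod _ _ (fun j _ => X_sub_C_ne_zero (ζ' j))]
    simp [natDegree_X_sub_C]
  have hQ'coeff : Q'.coeff n = 1 := by
    have := hQ'monic.coeff_natDegree
    rwa [hQ'deg] at this
  have hDdeg : (Q' - Q).natDegree < n :=
    natDegree_sub_lt' hn (le_of_eq hQ'deg) (le_of_eq hQdeg) (by rw [hQ'coeff, hQcoeff])
  set d : Fin n → ℝ := fun j => (Q' - Q).coeff (j:ℕ) with hd
  have hDeval : ∀ s : ℝ, (Q' - Q).eval s = ∑ j : Fin n, d j * s ^ (j:ℕ) := by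
    intro s
    rw [eval_eq_sum_range' hDdeg, ← Fin.sum_univ_eq_sum_range (fun k => (Q' - Q).coeff k * s ^ k) n]
  have hQint0 : ∀ i, ∫ s in Set.Ioo (b i) (a i), Q.eval s * w s = 0 := by
    intro i
    rw [show (fun s => Q.eval s * w s) = fun s => P.eval s * w s by rw [hPQ]]
    exact hPint0 i
  have hQ'int0 : ∀ i, ∫ s in Set.Ioo (b i) (a i), Q'.eval s * w s = 0 := by
    intro i
    rw [show (fun s => Q'.eval s * w s) = fun s => (∏ j : Fin n, (s - ζ' j)) * w s by
      funext s; rw [hQ'def]; simp [eval_prod]]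
    exact hζ'int i
  have hd0 : d = 0 := by
    apply coeffs_zero hn hba hsep hw hwpos
    intro i
    have h1 : IntegrableOn (fun s => Q'.eval s * w s) (Set.Ioo (b i) (a i)) :=
      gap_int_mul (hba i) (hw i) (Q'.continuous_aeval.congr fun s => rfl)
    have h2 : IntegrableOn (fun s => Q.eval s * w s) (Set.Ioo (b i) (a i)) :=
      gap_int_mul (hba i) (hw i) (Q.continuous_aeval.congr fun s => rfl)
    calc ∫ s in Set.Ioo (b i) (a i), (∑ j : Fin n, d j * s ^ (j:ℕ)) * w s
        = ∫ s in Set.Ioo (b i) (a i), (Q'.eval s * w s - Q.eval s * w s) := by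
          congr 1; funext s; rw [← hDeval s, eval_sub]; ring
      _ = (∫ s in Set.Ioo (b i) (a i), Q'.eval s * w s)
          - ∫ s in Set.Ioo (b i) (a i), Q.eval s * w s := integral_sub h1 h2
      _ = 0 := by rw [hQint0 i, hQ'int0 i]; ring
  have hQQ' : Q' = Q := by
    have : Q' - Q = 0 := by
      apply Polynomial.ext
      intro k
      rcases lt_or_ge k n with hk | hk
      · have := congrFun hd0 ⟨k, hk⟩
        simpa [hd] using this
      · rw [coeff_eq_zero_of_natDegree_lt (lt_of_lt_of_le hDdeg hk), coeff_zero]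
    exact sub_eq_zero.mp this
  funext i
  have hev : Q.eval (ζ' i) = 0 := by
    rw [← hQQ', hQ'def]
    simp only [eval_prod, eval_sub, eval_X, eval_C]
    rw [Finset.prod_eq_zero (Finset.mem_univ i) (by ring)]
  rw [hQdef] at hev
  simp only [eval_prod, eval_sub, eval_X, eval_C] at hev
  obtain ⟨j, _, hj⟩ := Finset.prod_eq_zero_iff.mp hev
  have hij : ζ' i = ζ j := by linarith [sub_eq_zero.mp hj]
  have : i = j := zeta_inj hba hsep hζ'mem hζmem hij
  rw [hij, this]
end Abstract

lemma alpha_le_beta {N : ℕ} {α β : Fin N → ℝ} (hab : ∀ i, α i < β i)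
    (hord : ∀ i j : Fin N, i < j → β i < α j) {k l : Fin N} (h : k.1 ≤ l.1) :
    α k ≤ β l := by
  rcases eq_or_lt_of_le h with he | hl
  · rw [Fin.ext he]; exact (hab l).le
  · exact (lt_trans (hab k) (lt_trans (hord k l (by rwa [Fin.lt_def])) (hab l))).le

/-- For N ≥ 2 disjoint ordered intervals [αᵢ, βᵢ], there is a unique choice of points
ζᵢ ∈ (βᵢ, α_{i+1}) such that ∫_{βᵢ}^{α_{i+1}} Z(ζ;s)/√|Y(s)| ds = 0 for every gap i. -/
theorem gap_roots_exist_unique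
    (N : ℕ) (hN : 2 ≤ N)
    (α β : Fin N → ℝ)
    (hab : ∀ i, α i < β i)
    (hord : ∀ i j : Fin N, i < j → β i < α j)
    (Y : ℝ → ℝ) (hY : ∀ s, Y s = ∏ i, (s - α i) * (s - β i))
    (Z : (Fin (N - 1) → ℝ) → ℝ → ℝ)
    (hZ : ∀ ζ s, Z ζ s = ∏ i : Fin (N - 1), (s - ζ i)) :
    ∃! ζ : Fin (N - 1) → ℝ,
      (∀ i : Fin (N - 1),
        ζ i ∈ Set.Ioo (β ⟨i.1, by have := i.2; omega⟩) (α ⟨i.1 + 1, by have := i.2; omega⟩)) ∧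
      (∀ i : Fin (N - 1),
        ∫ s in Set.Ioo (β ⟨i.1, by have := i.2; omega⟩) (α ⟨i.1 + 1, by have := i.2; omega⟩),
          Z ζ s / Real.sqrt |Y s| = 0) := by
  have hn : 0 < N - 1 := by omega
  have key := abstract_exu (n := N - 1)
    (b := fun i : Fin (N - 1) => β ⟨i.1, by have := i.2; omega⟩)
    (a := fun i : Fin (N - 1) => α ⟨i.1 + 1, by have := i.2; omega⟩)
    (w := fun s => (Real.sqrt |Y s|)⁻¹)
    hn
    (fun i => hord _ _ (Fin.mk_lt_mk.mpr (Nat.lt_succ_self _)))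
    (fun i j hij => alpha_le_beta hab hord (by
      have := hij
      rw [Fin.lt_def] at this
      simpa using this))
    (fun i => weight_integrable hab hord hY rfl)
    (fun i => weight_pos hab hord hY rfl)
  have hrw : ∀ (ζ : Fin (N - 1) → ℝ) (s : ℝ),
      Z ζ s / Real.sqrt |Y s| = (∏ j : Fin (N - 1), (s - ζ j)) * (Real.sqrt |Y s|)⁻¹ :=
    fun ζ s => by rw [hZ, div_eq_mul_inv]
  simp only [hrw]
  exact key
end

section
/- Let ν be a Borel probability measure on ℝ with compact support, define the complex potential Ψ(ν;z) = −∫ log(z − s) dν(s) for Im z > 0, using the principal branch of the complex logarithm. Then for every x ∈ ℝ with ν({x}) = 0, lim_{y→0⁺} Im Ψ(ν; x + iy) = −π ν([x, ∞)). -/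
open MeasureTheory Filter Topology

/-- Boundary values of the imaginary part of the complex potential: for a compactly
supported probability measure ν on ℝ and x with ν({x}) = 0,
Im Ψ(ν; x + iy) → −π ν([x,∞)) as y → 0⁺. -/
theorem complex_potential_imaginary_boundary_value
    (ν : Measure ℝ) (hν : IsProbabilityMeasure ν)
    (K : Set ℝ) (hK : IsCompact K) (hνK : ν Kᶜ = 0)
    (Ψ : ℂ → ℂ)
    (hΨ : ∀ z : ℂ, 0 < z.im → Ψ z = -∫ s, Complex.log (z - (s : ℂ)) ∂ν) :
    ∀ x : ℝ, ν {x} = 0 →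
      Tendsto (fun y : ℝ => (Ψ ((x : ℂ) + y * Complex.I)).im)
        (𝓝[>] 0) (𝓝 (-(Real.pi * (ν (Set.Ici x)).toReal))) := by
  intro x hx
  have haeK : ∀ᵐ s ∂ν, s ∈ K := by
    rw [MeasureTheory.ae_iff]
    simpa [Set.compl_def] using hνK
  have him : ∀ (y s : ℝ), ((x : ℂ) + y * Complex.I - s).im = y := by
    intro y s; simp
  -- continuity of s ↦ log (x + y i - s) for y > 0
  have hcont : ∀ y : ℝ, 0 < y →
      Continuous (fun s : ℝ => Complex.log ((x : ℂ) + y * Complex.I - s)) := by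
    intro y hy
    have hc : Continuous (fun s : ℝ => (x : ℂ) + y * Complex.I - s) := by
      continuity
    exact hc.clog fun s => by right; rw [him y s]; exact hy.ne'
  -- integrability
  have hInt : ∀ y : ℝ, 0 < y →
      Integrable (fun s : ℝ => Complex.log ((x : ℂ) + y * Complex.I - s)) ν := by
    intro y hy
    obtain ⟨C, hC⟩ := hK.exists_bound_of_continuousOn ((hcont y hy).continuousOn)
    refine Integrable.mono' (integrable_const C) ((hcont y hy).aestronglyMeasurable) ?_
    filter_upwards [haeK] with s hs using hC s hs
  -- pointwise a.e. limit of arg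
  have hae_ne : ∀ᵐ s ∂ν, s ≠ x := by
    rw [MeasureTheory.ae_iff]
    simpa using hx
  have hlim : ∀ᵐ s ∂ν, Tendsto (fun y : ℝ => Complex.arg ((x : ℂ) + y * Complex.I - Complex.ofReal s))
      (𝓝[>] 0) (𝓝 (Set.indicator (Set.Ici x) (fun _ => Real.pi) s)) := by
    filter_upwards [hae_ne] with s hs
    have hbase : Tendsto (fun y : ℝ => (x : ℂ) + y * Complex.I - s) (𝓝[>] 0)
        (𝓝 (((x - s : ℝ) : ℂ))) := by
      have : Tendsto (fun y : ℝ => (x : ℂ) + y * Complex.I - s) (𝓝 0)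
          (𝓝 ((x : ℂ) + (0:ℝ) * Complex.I - s)) := by
        apply Continuous.tendsto
        continuity
      simpa using this.mono_left nhdsWithin_le_nhds
    rcases lt_or_gt_of_ne hs with hlt | hgt
    · -- s < x : re of limit > 0, arg continuous, value 0
      rw [Set.indicator_of_notMem (by simp [hlt.not_ge] : s ∉ Set.Ici x)]
      have hmem : ((x - s : ℝ) : ℂ) ∈ Complex.slitPlane := by
        left; simpa using sub_pos.2 hlt
      have := (Complex.continuousAt_arg hmem).tendsto.comp hbase
      simpa [Function.comp_def, ← Complex.ofReal_sub, Complex.arg_ofReal_of_nonneg (sub_pos.2 hlt).le] using this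
    · -- s > x : converges to π from upper half plane
      rw [Set.indicator_of_mem (Set.mem_Ici.2 hgt.le)]
      have hre : ((x - s : ℝ) : ℂ).re < 0 := by simpa using sub_neg.2 hgt
      have him0 : ((x - s : ℝ) : ℂ).im = 0 := by simp
      have harg := Complex.tendsto_arg_nhdsWithin_im_nonneg_of_re_neg_of_im_zero hre him0
      refine harg.comp (tendsto_nhdsWithin_of_tendsto_nhds_of_eventually_within _ hbase ?_)
      filter_upwards [self_mem_nhdsWithin] with y hy
      simp only [Set.mem_setOf_eq, him]
      exact le_of_lt hy
  -- dominated convergence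
  have hDCT : Tendsto (fun y : ℝ => ∫ s, Complex.arg ((x : ℂ) + y * Complex.I - Complex.ofReal s) ∂ν)
      (𝓝[>] 0) (𝓝 (∫ s, Set.indicator (Set.Ici x) (fun _ => Real.pi) s ∂ν)) := by
    refine tendsto_integral_filter_of_dominated_convergence (fun _ => Real.pi) ?_ ?_
      (integrable_const _) hlim
    · filter_upwards [self_mem_nhdsWithin] with y hy
      exact (Complex.continuous_im.comp (hcont y hy)).aestronglyMeasurable.congr
        (by filter_upwards with s; simp [Function.comp, Complex.log_im])
    · filter_upwards [self_mem_nhdsWithin] with y hy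
      filter_upwards with s
      simpa [Real.norm_eq_abs] using Complex.abs_arg_le_pi _
  have hval : (∫ s, Set.indicator (Set.Ici x) (fun _ => Real.pi) s ∂ν)
      = Real.pi * (ν (Set.Ici x)).toReal := by
    rw [integral_indicator_const _ measurableSet_Ici, smul_eq_mul, mul_comm]
    rfl
  rw [hval] at hDCT
  refine (hDCT.neg).congr' ?_
  filter_upwards [self_mem_nhdsWithin] with y (hy : 0 < y)
  rw [hΨ _ (by simpa using hy)]
  have hIm := integral_im (𝕜 := ℂ) (hInt y hy)
  rw [RCLike.im_eq_complex_im] at hIm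
  rw [Complex.neg_im, ← hIm]
  simp [Complex.log_im]
end
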